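/- arXiv:2011.13008 — 3 statements merged into one kernel-verified Lean document; each statement's English description precedes it below -/
import Mathlib

section
/- Let A = {m ∈ ℕ : none of m, m+1, m+3, m+5 is prime} and B = {0, 1, 3, 5}. Then the sumset A + B equals the set of all composite natural numbers n with n ≥ 9. -/
open Pointwise

private lemma np_of_dvd (d k : ℕ) (hd : d ∣ k) (h1 : 2 ≤ d) (h2 : d < k) : ¬ k.Prime := by
  intro hp
  rcases hp.eq_one_or_self_of_dvd d hd with h | h <;> omega

theorem sumset_eq_composites :
    ({m : ℕ | ¬ m.Prime ∧ ¬ (m + 1).Prime ∧ ¬ (m + 3).Prime ∧ ¬ (m + 5).Prime}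
        + ({0, 1, 3, 5} : Set ℕ))
      = {n : ℕ | 9 ≤ n ∧ ¬ n.Prime} := by
  ext n
  simp only [Set.mem_add, Set.mem_setOf_eq, Set.mem_insert_iff, Set.mem_singleton_iff]
  constructor
  · rintro ⟨m, ⟨h0, h1, h3, h5⟩, b, hb, rfl⟩
    have hm : 9 ≤ m := by
      by_contra h
      push_neg at h
      interval_cases m <;> simp_all <;> norm_num at *
    rcases hb with rfl | rfl | rfl | rfl
    · exact ⟨by omega, h0⟩
    · exact ⟨by omega, h1⟩
    · exact ⟨by omega, h3⟩
    · exact ⟨by omega, h5⟩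
  · rintro ⟨hn9, hnp⟩
    rcases Nat.even_or_odd n with he | ho
    · rw [Nat.even_iff] at he
      have h2 : 10 ≤ n := by omega
      rcases (show n % 3 = 0 ∨ n % 3 = 1 ∨ n % 3 = 2 by omega) with h3 | h3 | h3
      · refine ⟨n - 3, ⟨?_, ?_, ?_, ?_⟩, 3, by simp, by omega⟩
        · exact np_of_dvd 3 _ (by omega) (by omega) (by omega)
        · exact np_of_dvd 2 _ (by omega) (by omega) (by omega)
        · have : n - 3 + 3 = n := by omega
          rwa [this]
        · exact np_of_dvd 2 _ (by omega) (by omega) (by omega)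
      · refine ⟨n - 1, ⟨?_, ?_, ?_, ?_⟩, 1, by simp, by omega⟩
        · exact np_of_dvd 3 _ (by omega) (by omega) (by omega)
        · have : n - 1 + 1 = n := by omega
          rwa [this]
        · exact np_of_dvd 2 _ (by omega) (by omega) (by omega)
        · exact np_of_dvd 2 _ (by omega) (by omega) (by omega)
      · refine ⟨n - 5, ⟨?_, ?_, ?_, ?_⟩, 5, by simp, by omega⟩
        · exact np_of_dvd 3 _ (by omega) (by omega) (by omega)
        · exact np_of_dvd 2 _ (by omega) (by omega) (by omega)
        · exact np_of_dvd 2 _ (by omega) (by omega) (by omega)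
        · have : n - 5 + 5 = n := by omega
          rwa [this]
    · rw [Nat.odd_iff] at ho
      refine ⟨n, ⟨hnp, ?_, ?_, ?_⟩, 0, by simp, by omega⟩
      · exact np_of_dvd 2 _ (by omega) (by omega) (by omega)
      · exact np_of_dvd 2 _ (by omega) (by omega) (by omega)
      · exact np_of_dvd 2 _ (by omega) (by omega) (by omega)
end

section
/- For any integers b₂, b₃ with 0 < b₂ < b₃, at least one of the six triples {−b₃,−b₂,b₃}, {−b₃,−b₂,b₂}, {−b₃+b₂, b₃−b₂, b₂}, {−b₃+b₂, −b₂, b₂}, {−b₃+b₂, b₃−b₂, b₃}, {−b₃, b₃−b₂, b₃} is an admissible set. -/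
def Admissible (T : Finset ℤ) : Prop :=
  ∀ p : ℕ, p.Prime → ∃ r : ZMod p, ∀ t ∈ T, (t : ZMod p) ≠ r

/-- A triple missing a residue mod 2 and mod 3 is admissible. -/
lemma admissible_of_23 (a b c : ℤ)
    (H2 : ∃ r : ZMod 2, (a : ZMod 2) ≠ r ∧ (b : ZMod 2) ≠ r ∧ (c : ZMod 2) ≠ r)
    (H3 : ∃ r : ZMod 3, (a : ZMod 3) ≠ r ∧ (b : ZMod 3) ≠ r ∧ (c : ZMod 3) ≠ r) :
    Admissible ({a, b, c} : Finset ℤ) := by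
  intro p hp
  by_cases hp2 : p = 2
  · subst hp2
    obtain ⟨r, h1, h2, h3⟩ := H2
    exact ⟨r, by intro t ht; simp only [Finset.mem_insert, Finset.mem_singleton] at ht
                 rcases ht with rfl | rfl | rfl <;> assumption⟩
  by_cases hp3 : p = 3
  · subst hp3
    obtain ⟨r, h1, h2, h3⟩ := H3
    exact ⟨r, by intro t ht; simp only [Finset.mem_insert, Finset.mem_singleton] at ht
                 rcases ht with rfl | rfl | rfl <;> assumption⟩
  · have h4 : p ≠ 4 := by rintro rfl; norm_num at hp
    have hgt : 3 < p := by have := hp.two_le; omega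
    haveI : NeZero p := ⟨by omega⟩
    by_contra h
    push_neg at h
    have hsub : (Finset.univ : Finset (ZMod p)) ⊆
        ({a, b, c} : Finset ℤ).image (Int.cast : ℤ → ZMod p) := by
      intro r _
      obtain ⟨t, ht, he⟩ := h r
      exact Finset.mem_image.2 ⟨t, ht, he⟩
    have hcard := Finset.card_le_card hsub
    have h1 : (({a, b, c} : Finset ℤ).image (Int.cast : ℤ → ZMod p)).card ≤ 3 := by
      refine le_trans (Finset.card_image_le) ?_
      refine le_trans (Finset.card_insert_le _ _) ?_
      have := Finset.card_insert_le b ({c} : Finset ℤ)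
      simp at this ⊢
      omega
    rw [Finset.card_univ, ZMod.card] at hcard
    omega

set_option maxHeartbeats 1000000 in
set_option synthInstance.maxHeartbeats 1000000 in
set_option synthInstance.maxSize 2000 in
theorem one_of_six_triples_admissible (b₂ b₃ : ℤ) (h2 : 0 < b₂) (h23 : b₂ < b₃) :
    Admissible ({-b₃, -b₂, b₃} : Finset ℤ) ∨
    Admissible ({-b₃, -b₂, b₂} : Finset ℤ) ∨
    Admissible ({-b₃ + b₂, b₃ - b₂, b₂} : Finset ℤ) ∨
    Admissible ({-b₃ + b₂, -b₂, b₂} : Finset ℤ) ∨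
    Admissible ({-b₃ + b₂, b₃ - b₂, b₃} : Finset ℤ) ∨
    Admissible ({-b₃, b₃ - b₂, b₃} : Finset ℤ) := by
  have key : ∀ (x y : ZMod 2) (u v : ZMod 3),
      ((∃ r : ZMod 2, -y ≠ r ∧ -x ≠ r ∧ y ≠ r) ∧
        (∃ r : ZMod 3, -v ≠ r ∧ -u ≠ r ∧ v ≠ r)) ∨
      ((∃ r : ZMod 2, -y ≠ r ∧ -x ≠ r ∧ x ≠ r) ∧
        (∃ r : ZMod 3, -v ≠ r ∧ -u ≠ r ∧ u ≠ r)) ∨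
      ((∃ r : ZMod 2, -y + x ≠ r ∧ y - x ≠ r ∧ x ≠ r) ∧
        (∃ r : ZMod 3, -v + u ≠ r ∧ v - u ≠ r ∧ u ≠ r)) ∨
      ((∃ r : ZMod 2, -y + x ≠ r ∧ -x ≠ r ∧ x ≠ r) ∧
        (∃ r : ZMod 3, -v + u ≠ r ∧ -u ≠ r ∧ u ≠ r)) ∨
      ((∃ r : ZMod 2, -y + x ≠ r ∧ y - x ≠ r ∧ y ≠ r) ∧
        (∃ r : ZMod 3, -v + u ≠ r ∧ v - u ≠ r ∧ v ≠ r)) ∨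
      ((∃ r : ZMod 2, -y ≠ r ∧ y - x ≠ r ∧ y ≠ r) ∧
        (∃ r : ZMod 3, -v ≠ r ∧ v - u ≠ r ∧ v ≠ r)) := by decide
  rcases key (b₂ : ZMod 2) (b₃ : ZMod 2) (b₂ : ZMod 3) (b₃ : ZMod 3) with
    ⟨ha, hb⟩ | ⟨ha, hb⟩ | ⟨ha, hb⟩ | ⟨ha, hb⟩ | ⟨ha, hb⟩ | ⟨ha, hb⟩
  · exact Or.inl (admissible_of_23 _ _ _ (by push_cast; exact ha) (by push_cast; exact hb))
  · exact Or.inr (Or.inl (admissible_of_23 _ _ _ (by push_cast; exact ha)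
      (by push_cast; exact hb)))
  · exact Or.inr (Or.inr (Or.inl (admissible_of_23 _ _ _ (by push_cast; exact ha)
      (by push_cast; exact hb))))
  · exact Or.inr (Or.inr (Or.inr (Or.inl (admissible_of_23 _ _ _ (by push_cast; exact ha)
      (by push_cast; exact hb)))))
  · exact Or.inr (Or.inr (Or.inr (Or.inr (Or.inl (admissible_of_23 _ _ _
      (by push_cast; exact ha) (by push_cast; exact hb))))))
  · exact Or.inr (Or.inr (Or.inr (Or.inr (Or.inr (admissible_of_23 _ _ _
      (by push_cast; exact ha) (by push_cast; exact hb))))))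
end

section
/- Let H≤3 be the set of natural numbers expressible as u₁ + ⋯ + u_ℓ with 1 ≤ ℓ ≤ 3, where each uᵢ is a power of 2 (including 2⁰ = 1) and the uᵢ are pairwise coprime. Then H≤3 = {1, 2} · {2^β : β ≥ 0} ∪ {1,2} · {2^β + 1 : β ≥ 0}, i.e., H≤3 = B · C with B = {1,2} and C = {2^β : β ≥ 0} ∪ {2^β + 1 : β ≥ 0}. -/
open Pointwise

/-!
Two powers of `n ≠ 1` are coprime only when one of them is `1`, so a pairwise coprime list of
`ℓ` powers of `n` sums to `n ^ a + (ℓ - 1)`. For `n = 2`, `ℓ ≤ 3`, the sums `2 ^ a` and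
`2 ^ a + 1` lie in `C`, and `2 ^ (b + 1) + 2 = 2 * (2 ^ b + 1)`, `2 ^ 0 + 2 = 2 ^ 1 + 1`.
-/

theorem Nat.coprime_pow_pow_iff {n : ℕ} (hn : n ≠ 1) {a b : ℕ} :
    Nat.Coprime (n ^ a) (n ^ b) ↔ a = 0 ∨ b = 0 := by
  refine ⟨fun h => ?_, ?_⟩
  · by_contra! hab
    rw [Nat.coprime_pow_left_iff (Nat.pos_of_ne_zero hab.1),
      Nat.coprime_pow_right_iff (Nat.pos_of_ne_zero hab.2), Nat.coprime_self] at h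
    exact hn h
  · rintro (rfl | rfl) <;> simp

/-- The paper's `H≤k` for `Γ = {n}`. -/
def coprimePowSums (n k : ℕ) : Set ℕ :=
  {m | ∃ l : List ℕ, 1 ≤ l.length ∧ l.length ≤ k ∧
    (∀ u ∈ l, ∃ a : ℕ, u = n ^ a) ∧ l.Pairwise Nat.Coprime ∧ m = l.sum}

theorem exists_sum_cons_eq_pow_add_length {n : ℕ} (hn : n ≠ 1) {u : ℕ} {l : List ℕ}
    (hpow : ∀ x ∈ u :: l, ∃ a : ℕ, x = n ^ a) (hcop : (u :: l).Pairwise Nat.Coprime) :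
    ∃ a : ℕ, (u :: l).sum = n ^ a + l.length := by
  induction l generalizing u with
  | nil =>
    obtain ⟨a, rfl⟩ := hpow u (by simp)
    exact ⟨a, by simp⟩
  | cons v l ih =>
    obtain ⟨c, rfl⟩ := hpow u (by simp)
    rw [List.pairwise_cons] at hcop
    rcases eq_or_ne c 0 with rfl | hc
    · obtain ⟨a, ha⟩ := ih (fun x hx => hpow x (List.mem_cons_of_mem _ hx)) hcop.2
      refine ⟨a, ?_⟩
      rw [List.sum_cons, ha, List.length_cons]
      ring
    · have hones : ∀ x ∈ v :: l, x = 1 := by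
        intro x hx
        obtain ⟨d, rfl⟩ := hpow x (List.mem_cons_of_mem _ hx)
        have hd := ((Nat.coprime_pow_pow_iff hn).1 (hcop.1 _ hx)).resolve_left hc
        simp [hd]
      refine ⟨c, ?_⟩
      rw [List.sum_cons, List.sum_eq_card_nsmul _ 1 hones]
      simp

theorem coprimePowSums_eq {n : ℕ} (hn : n ≠ 1) (k : ℕ) :
    coprimePowSums n k = {m | ∃ a j : ℕ, j < k ∧ m = n ^ a + j} := by
  ext m
  constructor
  · rintro ⟨_ | ⟨u, l⟩, hlen, hk, hpow, hcop, rfl⟩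
    · simp at hlen
    · obtain ⟨a, ha⟩ := exists_sum_cons_eq_pow_add_length hn hpow hcop
      exact ⟨a, l.length, by simpa using hk, ha⟩
  · rintro ⟨a, j, hj, rfl⟩
    refine ⟨n ^ a :: List.replicate j 1, by simp, by simpa using hj, ?_, ?_, by simp⟩
    · simp only [List.mem_cons, List.mem_replicate]
      rintro u (rfl | ⟨-, rfl⟩)
      exacts [⟨a, rfl⟩, ⟨0, rfl⟩]
    · simp [List.pairwise_replicate]

theorem two_pow_add_lt_three_eq_mul :
    {m | ∃ a j : ℕ, j < 3 ∧ m = 2 ^ a + j}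
      = ({1, 2} : Set ℕ) * ({m : ℕ | ∃ β : ℕ, m = 2 ^ β} ∪ {m : ℕ | ∃ β : ℕ, m = 2 ^ β + 1}) := by
  ext m
  simp only [Set.mem_ofPred_eq, Set.mem_mul, Set.mem_insert_iff, Set.mem_singleton_iff,
    Set.mem_union]
  constructor
  · rintro ⟨a, j, hj, rfl⟩
    interval_cases j
    · exact ⟨1, Or.inl rfl, _, Or.inl ⟨a, rfl⟩, by simp⟩
    · exact ⟨1, Or.inl rfl, _, Or.inr ⟨a, rfl⟩, by simp⟩
    · rcases a with _ | b
      · exact ⟨1, Or.inl rfl, _, Or.inr ⟨1, rfl⟩, rfl⟩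
      · exact ⟨2, Or.inr rfl, _, Or.inr ⟨b, rfl⟩, by ring⟩
  · rintro ⟨_, rfl | rfl, _, ⟨b, rfl⟩ | ⟨b, rfl⟩, rfl⟩
    · exact ⟨b, 0, by norm_num, by simp⟩
    · exact ⟨b, 1, by norm_num, by simp⟩
    · exact ⟨b + 1, 0, by norm_num, by ring⟩
    · exact ⟨b + 1, 2, by norm_num, by ring⟩

theorem Hle3_decomposition :
    {n : ℕ | ∃ l : List ℕ, 1 ≤ l.length ∧ l.length ≤ 3 ∧
        (∀ u ∈ l, ∃ a : ℕ, u = 2 ^ a) ∧ l.Pairwise Nat.Coprime ∧ n = l.sum}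
      = ({1, 2} : Set ℕ) *
        ({n : ℕ | ∃ β : ℕ, n = 2 ^ β} ∪ {n : ℕ | ∃ β : ℕ, n = 2 ^ β + 1}) := by
  change coprimePowSums 2 3 = _
  rw [coprimePowSums_eq (by norm_num), two_pow_add_lt_three_eq_mul]
end
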